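/- arXiv:2207.02387 — 3 statements merged into one kernel-verified Lean document; each statement's English description precedes it below -/
import Mathlib

section
/- Let ρ, a_max, b_min, b_max > 0 with b_min ≤ b_max. Define dRSS(v_f, v_r, s) = max(0, v_r·s + a_max·s²/2 + (v_r + a_max·s)²/(2·b_min) − v_f²/(2·b_max)). Along the combined dynamics y_f' = v_f, v_f' = −b_max, y_r' = v_r, v_r' = a_max, t' = 1 (valid while v_f > 0, v_r ≥ 0, and t < ρ), the quantity I(t) = y_f − y_r − dRSS(v_f, v_r, ρ − t) is nondecreasing: its Lie derivative equals 0 when the inner expression of dRSS is ≥ 0, and equals v_f − v_r ≥ 0 otherwise. -/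
/-! Write `g` for the expression inside the `max`. Along the flow the speed `v_r + a_max (ρ - t)`
that the rear car would reach at the end of the reaction time is constant, so `g' = v_f - v_r`;
hence `y_f - y_r - g` is constant and `I = (y_f - y_r - g) + min g 0`. Where `g ≤ 0` the front
car's braking distance dominates the rear car's, which forces `v_r ≤ v_f`, so `min g 0` is
nondecreasing. -/

/-- The (remaining-time) RSS safety distance. -/
noncomputable def dRSS3 (ρ amax bmin bmax vf vr s : ℝ) : ℝ :=
  max 0 (vr * s + amax * s ^ 2 / 2 + (vr + amax * s) ^ 2 / (2 * bmin)
    - vf ^ 2 / (2 * bmax))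

open Set

theorem monotoneOn_min_of_hasDerivAt {f f' : ℝ → ℝ} {a b c : ℝ}
    (hf : ∀ x ∈ Icc a b, HasDerivAt f (f' x) x)
    (hf' : ∀ x ∈ Icc a b, f x ≤ c → 0 ≤ f' x) :
    MonotoneOn (fun x => min (f x) c) (Icc a b) := by
  intro s hs t ht hst
  set m := min (f s) c
  have hsub : Icc s t ⊆ Icc a b := Icc_subset_Icc hs.1 ht.2
  -- The barrier lies strictly above `-m ≥ -c`, so `-f` can touch it only where `f < c`,
  -- and there `-f' ≤ 0 < ε`.
  have fence : ∀ ε > 0, -f t ≤ -m + ε * (t - s + 1) := by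
    intro ε hε
    have hB : ∀ x, HasDerivAt (fun x => -m + ε * (x - s + 1)) ε x := fun x => by
      simpa using (((hasDerivAt_id x).sub_const s).add_const 1).const_mul ε |>.const_add (-m)
    refine image_le_of_deriv_right_lt_deriv_boundary (f := fun x => -f x) (f' := fun x => -f' x)
      (fun x hx => (hf x (hsub hx)).continuousAt.continuousWithinAt.neg)
      (fun x hx => (hf x (hsub (Ico_subset_Icc_self hx))).neg.hasDerivWithinAt)
      ?_ hB (fun x hx hfx => ?_) ⟨hst, le_rfl⟩
    · linarith [min_le_left (f s) c]
    · have hεx : 0 < ε * (x - s + 1) := mul_pos hε (by linarith [hx.1])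
      have hfc : f x ≤ c := by linarith [min_le_right (f s) c]
      linarith [hf' x (hsub (Ico_subset_Icc_self hx)) hfc]
  refine le_min (le_of_forall_pos_le_add fun ε hε => ?_) (min_le_right _ _)
  have hlen : 0 < t - s + 1 := by linarith
  have := fence (ε / (t - s + 1)) (div_pos hε hlen)
  rw [div_mul_cancel₀ _ hlen.ne'] at this
  linarith

noncomputable def dRSSInner (amax bmin bmax vf vr s : ℝ) : ℝ :=
  vr * s + amax * s ^ 2 / 2 + (vr + amax * s) ^ 2 / (2 * bmin) - vf ^ 2 / (2 * bmax)

theorem sub_dRSS3_eq (ρ amax bmin bmax vf vr s x : ℝ) :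
    x - dRSS3 ρ amax bmin bmax vf vr s =
      (x - dRSSInner amax bmin bmax vf vr s) + min (dRSSInner amax bmin bmax vf vr s) 0 := by
  have := min_add_max (dRSSInner amax bmin bmax vf vr s) 0
  rw [dRSS3, ← dRSSInner, max_comm]
  linarith

theorem dRSS3_eq_zero {ρ amax bmin bmax vf vr s : ℝ}
    (h : dRSSInner amax bmin bmax vf vr s ≤ 0) :
    dRSS3 ρ amax bmin bmax vf vr s = 0 :=
  max_eq_left h

theorem dRSS3_eq_dRSSInner {ρ amax bmin bmax vf vr s : ℝ}
    (h : 0 ≤ dRSSInner amax bmin bmax vf vr s) :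
    dRSS3 ρ amax bmin bmax vf vr s = dRSSInner amax bmin bmax vf vr s :=
  max_eq_right h

theorem hasDerivAt_dRSSInner {ρ amax bmin bmax t : ℝ} {vf vr : ℝ → ℝ}
    (hvf : HasDerivAt vf (-bmax) t) (hvr : HasDerivAt vr amax t) (hbmax : bmax ≠ 0) :
    HasDerivAt (fun s => dRSSInner amax bmin bmax (vf s) (vr s) (ρ - s)) (vf t - vr t) t := by
  have hτ : HasDerivAt (fun s : ℝ => ρ - s) (-1) t := by
    simpa using (hasDerivAt_id t).const_sub ρ
  have := (((hvr.mul hτ).add ((hτ.pow 2).const_mul amax |>.div_const 2)).add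
    ((hvr.add (hτ.const_mul amax)).pow 2 |>.div_const (2 * bmin))).sub
    ((hvf.pow 2).div_const (2 * bmax))
  exact this.congr_deriv (by field_simp; ring)

theorem le_of_dRSSInner_nonpos {amax bmin bmax vf vr s : ℝ}
    (hamax : 0 ≤ amax) (hbmin : 0 < bmin) (hle : bmin ≤ bmax)
    (hvf : 0 ≤ vf) (hvr : 0 ≤ vr) (hs : 0 ≤ s)
    (h : dRSSInner amax bmin bmax vf vr s ≤ 0) : vr ≤ vf := by
  have hbmax : 0 < bmax := hbmin.trans_le hle
  have hend : vr ^ 2 / (2 * bmin) ≤ (vr + amax * s) ^ 2 / (2 * bmin) := by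
    gcongr
    nlinarith [mul_nonneg hamax hs]
  have hsq : vr ^ 2 / (2 * bmax) ≤ vf ^ 2 / (2 * bmax) := calc
    vr ^ 2 / (2 * bmax) ≤ vr ^ 2 / (2 * bmin) := by gcongr
    _ ≤ (vr + amax * s) ^ 2 / (2 * bmin) := hend
    _ ≤ vf ^ 2 / (2 * bmax) := by
      unfold dRSSInner at h
      nlinarith [mul_nonneg hvr hs, mul_nonneg hamax (sq_nonneg s)]
  have : vr ^ 2 ≤ vf ^ 2 := by
    rwa [div_le_div_iff_of_pos_right (by positivity)] at hsq
  exact (sq_le_sq₀ hvr hvf).1 this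

theorem stmt7_general (ρ amax bmin bmax : ℝ)
    (ha : 0 < amax) (hb1 : 0 < bmin) (hb2 : 0 < bmax)
    (hle : bmin ≤ bmax)
    (yf vf yr vr : ℝ → ℝ) (a c : ℝ)
    (hyf : ∀ t ∈ Set.Icc a c, HasDerivAt yf (vf t) t)
    (hvf : ∀ t ∈ Set.Icc a c, HasDerivAt vf (-bmax) t)
    (hyr : ∀ t ∈ Set.Icc a c, HasDerivAt yr (vr t) t)
    (hvr : ∀ t ∈ Set.Icc a c, HasDerivAt vr amax t)
    (hvfpos : ∀ t ∈ Set.Icc a c, 0 < vf t)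
    (hvrpos : ∀ t ∈ Set.Icc a c, 0 ≤ vr t)
    (htρ : ∀ t ∈ Set.Icc a c, t < ρ) :
    MonotoneOn
      (fun t => yf t - yr t - dRSS3 ρ amax bmin bmax (vf t) (vr t) (ρ - t))
      (Set.Icc a c) ∧
    (∀ t ∈ Set.Ioo a c,
      0 < vr t * (ρ - t) + amax * (ρ - t) ^ 2 / 2
          + (vr t + amax * (ρ - t)) ^ 2 / (2 * bmin) - (vf t) ^ 2 / (2 * bmax) →
      HasDerivAt
        (fun s => yf s - yr s - dRSS3 ρ amax bmin bmax (vf s) (vr s) (ρ - s))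
        0 t) ∧
    (∀ t ∈ Set.Ioo a c,
      vr t * (ρ - t) + amax * (ρ - t) ^ 2 / 2
          + (vr t + amax * (ρ - t)) ^ 2 / (2 * bmin) - (vf t) ^ 2 / (2 * bmax) < 0 →
      HasDerivAt
        (fun s => yf s - yr s - dRSS3 ρ amax bmin bmax (vf s) (vr s) (ρ - s))
        (vf t - vr t) t ∧ 0 ≤ vf t - vr t) := by
  set G : ℝ → ℝ := fun s => dRSSInner amax bmin bmax (vf s) (vr s) (ρ - s)
  have hG : ∀ t ∈ Icc a c, HasDerivAt G (vf t - vr t) t :=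
    fun t ht => hasDerivAt_dRSSInner (hvf t ht) (hvr t ht) hb2.ne'
  have hGnonpos : ∀ t ∈ Icc a c, G t ≤ 0 → 0 ≤ vf t - vr t := fun t ht h =>
    sub_nonneg.2 (le_of_dRSSInner_nonpos ha.le hb1 hle (hvfpos t ht).le (hvrpos t ht)
      (sub_nonneg.2 (htρ t ht).le) h)
  have hH : ∀ t ∈ Icc a c, HasDerivAt (fun s => yf s - yr s - G s) 0 t := fun t ht =>
    (((hyf t ht).sub (hyr t ht)).sub (hG t ht)).congr_deriv (sub_self _)
  refine ⟨?_, fun t ht hpos => ?_, fun t ht hneg => ?_⟩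
  · have hHmono : MonotoneOn (fun s => yf s - yr s - G s) (Icc a c) :=
      monotoneOn_of_hasDerivWithinAt_nonneg (convex_Icc a c)
        (fun x hx => (hH x hx).continuousAt.continuousWithinAt)
        (fun x hx => (hH x (interior_subset hx)).hasDerivWithinAt) (fun _ _ => le_rfl)
    simpa only [sub_dRSS3_eq] using hHmono.add (monotoneOn_min_of_hasDerivAt hG hGnonpos)
  · have ht' := Ioo_subset_Icc_self ht
    refine (hH t ht').congr_of_eventuallyEq ?_
    filter_upwards [(hG t ht').continuousAt.eventually (eventually_gt_nhds hpos)] with s hs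
    rw [dRSS3_eq_dRSSInner hs.le]
  · have ht' := Ioo_subset_Icc_self ht
    refine ⟨((hyf t ht').sub (hyr t ht')).congr_of_eventuallyEq ?_, hGnonpos t ht' hneg.le⟩
    filter_upwards [(hG t ht').continuousAt.eventually (eventually_lt_nhds hneg)] with s hs
    rw [dRSS3_eq_zero hs.le, sub_zero, Pi.sub_apply]

/-- Invariant preservation for the reaction phase of the one-way traffic proper
response: along `y_f' = v_f, v_f' = −bmax, y_r' = v_r, v_r' = amax` (valid while
`v_f > 0`, `v_r ≥ 0`, `t < ρ`), the margin
`I(t) = y_f − y_r − dRSS(v_f, v_r, ρ − t)` is nondecreasing; its derivative is `0`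
where the inner expression of the `max` is positive, and is `v_f − v_r ≥ 0` where
it is negative. -/
theorem stmt7 (ρ amax bmin bmax : ℝ)
    (hρ : 0 < ρ) (ha : 0 < amax) (hb1 : 0 < bmin) (hb2 : 0 < bmax)
    (hle : bmin ≤ bmax)
    (yf vf yr vr : ℝ → ℝ) (a c : ℝ) (hac : a ≤ c) (h0a : 0 ≤ a)
    (hyf : ∀ t ∈ Set.Icc a c, HasDerivAt yf (vf t) t)
    (hvf : ∀ t ∈ Set.Icc a c, HasDerivAt vf (-bmax) t)
    (hyr : ∀ t ∈ Set.Icc a c, HasDerivAt yr (vr t) t)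
    (hvr : ∀ t ∈ Set.Icc a c, HasDerivAt vr amax t)
    (hvfpos : ∀ t ∈ Set.Icc a c, 0 < vf t)
    (hvrpos : ∀ t ∈ Set.Icc a c, 0 ≤ vr t)
    (htρ : ∀ t ∈ Set.Icc a c, t < ρ) :
    MonotoneOn
      (fun t => yf t - yr t - dRSS3 ρ amax bmin bmax (vf t) (vr t) (ρ - t))
      (Set.Icc a c) ∧
    (∀ t ∈ Set.Ioo a c,
      0 < vr t * (ρ - t) + amax * (ρ - t) ^ 2 / 2
          + (vr t + amax * (ρ - t)) ^ 2 / (2 * bmin) - (vf t) ^ 2 / (2 * bmax) →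
      HasDerivAt
        (fun s => yf s - yr s - dRSS3 ρ amax bmin bmax (vf s) (vr s) (ρ - s))
        0 t) ∧
    (∀ t ∈ Set.Ioo a c,
      vr t * (ρ - t) + amax * (ρ - t) ^ 2 / 2
          + (vr t + amax * (ρ - t)) ^ 2 / (2 * bmin) - (vf t) ^ 2 / (2 * bmax) < 0 →
      HasDerivAt
        (fun s => yf s - yr s - dRSS3 ρ amax bmin bmax (vf s) (vr s) (ρ - s))
        (vf t - vr t) t ∧ 0 ≤ vf t - vr t) :=
  stmt7_general ρ amax bmin bmax ha hb1 hb2 hle yf vf yr vr a c hyf hvf hyr hvr hvfpos hvrpos htρ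
end

section
/- Let b_min > 0 and suppose 0 < v₀ and v₀²/(2·b_min) ≤ y_tgt − y₀. Consider first the cruising phase y' = v₀ (constant speed) until y reaches y_tgt − v₀²/(2·b_min), then the braking phase y' = v, v' = −b_min until v = 0. Then the vehicle stops exactly at y = y_tgt, the total position never exceeds y_tgt, and v stays in [0, v₀] throughout. -/
/-!
While cruising, `y` is affine with slope `v₀`; while braking, `y(T₁ + s) = y(T₁) + v₀ s - b s² / 2`,
whose maximum over `s`, reached exactly when the vehicle stops at `s = v₀ / b`, is
`y(T₁) + v₀² / (2 b)`. The switching time `T₁` is chosen so that `y(T₁) = y_tgt - v₀² / (2 b)`,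
and the precondition is exactly `T₁ ≥ 0`.
-/

open Set

section Kinematics

variable {f g f' y v : ℝ → ℝ} {a b c : ℝ}

theorem eq_of_hasDerivWithinAt_Icc
    (hf : ∀ t ∈ Icc a b, HasDerivWithinAt f (f' t) (Icc a b) t)
    (hg : ∀ t, HasDerivAt g (f' t) t) (ha : f a = g a) :
    ∀ t ∈ Icc a b, f t = g t := by
  refine eq_of_has_deriv_right_eq (fun t ht => ?_) (fun t _ => (hg t).hasDerivWithinAt)
    (fun t ht => (hf t ht).continuousWithinAt) (fun t _ => (hg t).continuousAt.continuousWithinAt) ha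
  exact (hf t (Ico_subset_Icc_self ht)).mono_of_mem_nhdsWithin (Icc_mem_nhdsGE_of_mem ht)

theorem eq_add_mul_sub_of_hasDerivWithinAt_const
    (hf : ∀ t ∈ Icc a b, HasDerivWithinAt f c (Icc a b) t) :
    ∀ t ∈ Icc a b, f t = f a + c * (t - a) :=
  eq_of_hasDerivWithinAt_Icc hf
    (fun t => by simpa using ((hasDerivAt_id t).sub_const a).const_mul c |>.const_add (f a))
    (by simp)

theorem eq_add_mul_sub_add_mul_sq_of_hasDerivWithinAt_const
    (hy : ∀ t ∈ Icc a b, HasDerivWithinAt y (v t) (Icc a b) t)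
    (hv : ∀ t ∈ Icc a b, HasDerivWithinAt v c (Icc a b) t) :
    ∀ t ∈ Icc a b, y t = y a + v a * (t - a) + c * (t - a) ^ 2 / 2 := by
  have hvt := eq_add_mul_sub_of_hasDerivWithinAt_const hv
  refine eq_of_hasDerivWithinAt_Icc (fun t ht => hvt t ht ▸ hy t ht) (fun t => ?_) (by simp)
  have hs := (hasDerivAt_id' t).sub_const a
  exact ((hs.const_mul (v a)).const_add (y a)).fun_add
    ((hs.fun_pow 2).const_mul c |>.div_const 2) |>.congr_deriv (by push_cast; ring)

theorem mul_sub_mul_sq_div_two_le (hb : 0 < b) (u s : ℝ) :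
    u * s - b * s ^ 2 / 2 ≤ u ^ 2 / (2 * b) := by
  rw [le_div_iff₀ (by positivity)]
  nlinarith [sq_nonneg (u - b * s)]

theorem braking_phase {u : ℝ} (hb : 0 < b) (hu : 0 ≤ u) (hva : v a = u)
    (hy : ∀ t ∈ Icc a (a + u / b), HasDerivWithinAt y (v t) (Icc a (a + u / b)) t)
    (hv : ∀ t ∈ Icc a (a + u / b), HasDerivWithinAt v (-b) (Icc a (a + u / b)) t) :
    v (a + u / b) = 0 ∧ y (a + u / b) = y a + u ^ 2 / (2 * b) ∧
      ∀ t ∈ Icc a (a + u / b), y t ≤ y a + u ^ 2 / (2 * b) ∧ 0 ≤ v t ∧ v t ≤ u := by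
  have hend : a + u / b ∈ Icc a (a + u / b) := ⟨by simp; positivity, le_rfl⟩
  have hvt := eq_add_mul_sub_of_hasDerivWithinAt_const hv
  have hyt := eq_add_mul_sub_add_mul_sq_of_hasDerivWithinAt_const hy hv
  refine ⟨?_, ?_, fun t ht => ⟨?_, ?_, ?_⟩⟩
  · rw [hvt _ hend, hva]; field_simp; ring
  · rw [hyt _ hend, hva]; field_simp; ring
  · rw [hyt t ht, hva]
    linarith [mul_sub_mul_sq_div_two_le hb u (t - a)]
  · have : b * (t - a) ≤ u := by
      rw [← le_div_iff₀' hb]; linarith [ht.2]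
    rw [hvt t ht, hva]; linarith
  · rw [hvt t ht, hva]; nlinarith [ht.1]

end Kinematics

theorem stmt8_general (bmin ytgt y0 v0 : ℝ) (hb : 0 < bmin) (hv : 0 < v0)
    (hpre : v0 ^ 2 / (2 * bmin) ≤ ytgt - y0)
    (y v : ℝ → ℝ) (hy0 : y 0 = y0)
    (T1 T2 : ℝ)
    (hT1 : T1 = (ytgt - y0 - v0 ^ 2 / (2 * bmin)) / v0)
    (hT2 : T2 = T1 + v0 / bmin)
    (hy : ∀ t ∈ Set.Icc (0 : ℝ) T2, HasDerivWithinAt y (v t) (Set.Icc 0 T2) t)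
    (hv1 : ∀ t ∈ Set.Icc (0 : ℝ) T1, v t = v0)
    (hv2 : ∀ t ∈ Set.Icc T1 T2, HasDerivWithinAt v (-bmin) (Set.Icc T1 T2) t) :
    v T2 = 0 ∧ y T2 = ytgt ∧
      ∀ t ∈ Set.Icc (0 : ℝ) T2, y t ≤ ytgt ∧ 0 ≤ v t ∧ v t ≤ v0 := by
  have hT1_nonneg : 0 ≤ T1 := hT1 ▸ div_nonneg (by linarith) hv.le
  have hT1_mem : T1 ∈ Icc 0 T1 := ⟨hT1_nonneg, le_rfl⟩
  have hT12 : T1 ≤ T2 := by rw [hT2]; linarith [div_pos hv hb]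
  have hcruise : ∀ t ∈ Icc 0 T1, y t = y0 + v0 * t := by
    intro t ht
    simpa [← hy0] using eq_add_mul_sub_of_hasDerivWithinAt_const (fun s hs =>
      hv1 s hs ▸ (hy s (Icc_subset_Icc_right hT12 hs)).mono (Icc_subset_Icc_right hT12)) t ht
  have hyT1 : y T1 = ytgt - v0 ^ 2 / (2 * bmin) := by
    rw [hcruise T1 hT1_mem, hT1]; field_simp; ring
  subst hT2
  obtain ⟨hvT2, hyT2, hbrake⟩ := braking_phase hb hv.le (hv1 T1 hT1_mem)
    (fun t ht => (hy t (Icc_subset_Icc_left hT1_nonneg ht)).mono (Icc_subset_Icc_left hT1_nonneg))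
    hv2
  refine ⟨hvT2, by rw [hyT2, hyT1]; ring, fun t ht => ?_⟩
  rcases le_or_gt t T1 with htT1 | hT1t
  · have ht' : t ∈ Icc 0 T1 := ⟨ht.1, htT1⟩
    rw [hcruise t ht', hv1 t ht']
    refine ⟨?_, hv.le, le_rfl⟩
    have : v0 * t ≤ v0 * T1 := mul_le_mul_of_nonneg_left htT1 hv.le
    linarith [hcruise T1 hT1_mem, show 0 ≤ v0 ^ 2 / (2 * bmin) by positivity]
  · obtain ⟨hyt, hvt⟩ := hbrake t ⟨hT1t.le, ht.2⟩
    exact ⟨by linarith, hvt⟩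

/-- Correctness of the cruise-then-brake proper response: under the
stopping-distance precondition `v₀²/(2 bmin) ≤ ytgt − y₀`, cruising at speed `v₀`
until the switching time `T₁` and then braking at `bmin` until the stopping time
`T₂` stops exactly at `ytgt`, never exceeds `ytgt`, and keeps `v ∈ [0, v₀]`. -/
theorem stmt8 (bmin ytgt y0 v0 : ℝ) (hb : 0 < bmin) (hv : 0 < v0)
    (hpre : v0 ^ 2 / (2 * bmin) ≤ ytgt - y0)
    (y v : ℝ → ℝ) (hy0 : y 0 = y0) (hv0 : v 0 = v0)
    (T1 T2 : ℝ)
    (hT1 : T1 = (ytgt - y0 - v0 ^ 2 / (2 * bmin)) / v0)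
    (hT2 : T2 = T1 + v0 / bmin)
    (hy : ∀ t ∈ Set.Icc (0 : ℝ) T2, HasDerivWithinAt y (v t) (Set.Icc 0 T2) t)
    (hv1 : ∀ t ∈ Set.Icc (0 : ℝ) T1, v t = v0)
    (hv2 : ∀ t ∈ Set.Icc T1 T2, HasDerivWithinAt v (-bmin) (Set.Icc T1 T2) t) :
    v T2 = 0 ∧ y T2 = ytgt ∧
      ∀ t ∈ Set.Icc (0 : ℝ) T2, y t ≤ ytgt ∧ 0 ≤ v t ∧ v t ≤ v0 :=
  stmt8_general bmin ytgt y0 v0 hb hv hpre y v hy0 T1 T2 hT1 hT2 hy hv1 hv2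
end

section
/- Let e_var, e_ter : ℝⁿ → ℝ be continuously differentiable, and let x : [0,∞) → ℝⁿ solve x' = f(x) for a locally Lipschitz f with global solutions. Suppose at t = 0: e_var(x(0)) ≥ 0 and e_ter(x(0)) < 0; and whenever e_var(x(t)) ≥ 0 along the trajectory, the derivatives satisfy d/dt[e_var(x(t))] ≤ e_ter(x(t)) and d/dt[e_ter(x(t))] ≤ 0. Then there exists T ∈ [0, −e_var(x(0))/e_ter(x(0))] such that e_var(x(T)) = 0 and e_var(x(t)) > 0 for all t < T with e_var(x(0)) > 0 (or T = 0 if e_var(x(0)) = 0), and e_var(x(t)) ≥ 0 for all t ∈ [0, T]. -/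
/-!
Write `V = e_var ∘ x` and `E = e_ter ∘ x`. As long as `V ≥ 0`, `E` is nonincreasing, so
`V' ≤ E ≤ E 0 < 0` and `V` lies below the line `V 0 + E 0 * t`, which vanishes at
`T₀ = -V 0 / E 0`. Hence `V` cannot stay positive on all of `[0, T₀]`: it reaches a value
`≤ 0` there, and the intermediate value theorem then yields a least zero `T ≤ T₀`, before
which `V` is positive.
-/

open Set

theorem sub_le_mul_sub_of_deriv_le_of_deriv_nonpos {V E : ℝ → ℝ} {a b : ℝ} (hab : a ≤ b)
    (hVc : ContinuousOn V (Icc a b)) (hEc : ContinuousOn E (Icc a b))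
    (hVd : DifferentiableOn ℝ V (Ioo a b)) (hEd : DifferentiableOn ℝ E (Ioo a b))
    (hV' : ∀ s ∈ Ioo a b, deriv V s ≤ E s) (hE' : ∀ s ∈ Ioo a b, deriv E s ≤ 0) :
    V b - V a ≤ E a * (b - a) := by
  have hEanti : AntitoneOn E (Icc a b) :=
    antitoneOn_of_deriv_nonpos (convex_Icc a b) hEc (by rwa [interior_Icc])
      (by rwa [interior_Icc])
  refine (convex_Icc a b).image_sub_le_mul_sub_of_deriv_le hVc (by rwa [interior_Icc])
    (fun s hs => ?_) a (left_mem_Icc.2 hab) b (right_mem_Icc.2 hab) hab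
  rw [interior_Icc] at hs
  exact (hV' s hs).trans (hEanti (left_mem_Icc.2 hab) (Ioo_subset_Icc_self hs) hs.1.le)

theorem exists_eq_zero_forall_pos_of_continuousOn {V : ℝ → ℝ} {a b : ℝ} (hab : a ≤ b)
    (hV : ContinuousOn V (Icc a b)) (ha : 0 ≤ V a) (hb : V b ≤ 0) :
    ∃ T ∈ Icc a b, V T = 0 ∧ ∀ t ∈ Ico a T, 0 < V t := by
  have hzeros : IsCompact (Icc a b ∩ V ⁻¹' {0}) :=
    isCompact_Icc.of_isClosed_subset
      (hV.preimage_isClosed_of_isClosed isClosed_Icc isClosed_singleton) inter_subset_left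
  obtain ⟨c, hc, hVc⟩ := intermediate_value_Icc' hab hV ⟨hb, ha⟩
  obtain ⟨T, ⟨hT, hVT⟩, hleast⟩ := hzeros.exists_isLeast ⟨c, hc, hVc⟩
  refine ⟨T, hT, hVT, fun t ht => lt_of_not_ge fun hVt => ?_⟩
  -- a value `V t ≤ 0` with `t < T` would produce a zero in `[a, t]`, before `T`
  obtain ⟨s, hs, hVs⟩ := intermediate_value_Icc' ht.1 (hV.mono (Icc_subset_Icc_right
    (ht.2.le.trans hT.2))) ⟨hVt, ha⟩
  have hsT : T ≤ s := hleast ⟨⟨hs.1, hs.2.trans (ht.2.le.trans hT.2)⟩, hVs⟩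
  exact absurd (hsT.trans hs.2) (not_le.2 ht.2)

theorem exists_nonpos_of_deriv_le_of_deriv_nonpos {V E : ℝ → ℝ}
    (hVd : ∀ t, 0 ≤ t → DifferentiableAt ℝ V t) (hEd : ∀ t, 0 ≤ t → DifferentiableAt ℝ E t)
    (hV0 : 0 ≤ V 0) (hE0 : E 0 < 0)
    (hV' : ∀ t, 0 ≤ t → 0 ≤ V t → deriv V t ≤ E t)
    (hE' : ∀ t, 0 ≤ t → 0 ≤ V t → deriv E t ≤ 0) :
    ∃ b ∈ Icc 0 (-V 0 / E 0), V b ≤ 0 := by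
  set T₀ := -V 0 / E 0
  have hT₀ : 0 ≤ T₀ := div_nonneg_of_nonpos (neg_nonpos.2 hV0) hE0.le
  by_contra! hpos
  have hnonneg : ∀ s ∈ Icc 0 T₀, 0 ≤ V s := fun s hs => (hpos s hs).le
  have hline := sub_le_mul_sub_of_deriv_le_of_deriv_nonpos hT₀
    (fun s hs => (hVd s hs.1).continuousAt.continuousWithinAt)
    (fun s hs => (hEd s hs.1).continuousAt.continuousWithinAt)
    (fun s hs => (hVd s hs.1.le).differentiableWithinAt)
    (fun s hs => (hEd s hs.1.le).differentiableWithinAt)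
    (fun s hs => hV' s hs.1.le (hnonneg s (Ioo_subset_Icc_self hs)))
    (fun s hs => hE' s hs.1.le (hnonneg s (Ioo_subset_Icc_self hs)))
  have hT₀zero : V 0 + E 0 * (T₀ - 0) = 0 := by
    simp only [T₀, sub_zero]
    field_simp [hE0.ne]
    ring
  linarith [hpos T₀ (right_mem_Icc.2 hT₀)]

theorem stmt19_general {n : ℕ}
    (evar eter : (Fin n → ℝ) → ℝ) (f : (Fin n → ℝ) → (Fin n → ℝ))
    (x : ℝ → (Fin n → ℝ))
    (hevar : ContDiff ℝ 1 evar) (heter : ContDiff ℝ 1 eter)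
    (hx : ∀ t, 0 ≤ t → HasDerivAt x (f (x t)) t)
    (h0var : 0 ≤ evar (x 0)) (h0ter : eter (x 0) < 0)
    (hvar : ∀ t, 0 ≤ t → 0 ≤ evar (x t) →
      deriv (fun s => evar (x s)) t ≤ eter (x t))
    (hter : ∀ t, 0 ≤ t → 0 ≤ evar (x t) →
      deriv (fun s => eter (x s)) t ≤ 0) :
    ∃ T, 0 ≤ T ∧ T ≤ -(evar (x 0)) / eter (x 0) ∧
      evar (x T) = 0 ∧
      (0 < evar (x 0) → ∀ t, 0 ≤ t → t < T → 0 < evar (x t)) ∧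
      (evar (x 0) = 0 → T = 0) ∧
      (∀ t, 0 ≤ t → t ≤ T → 0 ≤ evar (x t)) := by
  have hVd : ∀ t, 0 ≤ t → DifferentiableAt ℝ (fun s => evar (x s)) t := fun t ht =>
    (hevar.differentiable one_ne_zero _).comp t (hx t ht).differentiableAt
  have hEd : ∀ t, 0 ≤ t → DifferentiableAt ℝ (fun s => eter (x s)) t := fun t ht =>
    (heter.differentiable one_ne_zero _).comp t (hx t ht).differentiableAt
  obtain ⟨b, hb, hVb⟩ :=
    exists_nonpos_of_deriv_le_of_deriv_nonpos hVd hEd h0var h0ter hvar hter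
  obtain ⟨T, hT, hVT, hpos⟩ := exists_eq_zero_forall_pos_of_continuousOn hb.1
    (fun s hs => (hVd s hs.1).continuousAt.continuousWithinAt) h0var hVb
  refine ⟨T, hT.1, hT.2.trans hb.2, hVT, fun _ t ht htT => hpos t ⟨ht, htT⟩, fun h0 => ?_,
    fun t ht htT => ?_⟩
  · exact le_antisymm (not_lt.1 fun hT0 => (hpos 0 ⟨le_rfl, hT0⟩).ne' h0) hT.1
  · rcases htT.lt_or_eq with htT | rfl
    · exact (hpos t ⟨ht, htT⟩).le
    · exact hVT.ge

/-- Steps 2–4 of the soundness proof of the (DWh) rule, combined: along a global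
solution `x` of `x' = f(x)` (with `f` locally Lipschitz and `e_var, e_ter` C¹),
if initially `e_var(x 0) ≥ 0` and `e_ter(x 0) < 0`, and wherever `e_var ≥ 0` along
the trajectory the derivative of `e_var ∘ x` is bounded by `e_ter ∘ x` and the
derivative of `e_ter ∘ x` is nonpositive, then `e_var ∘ x` reaches exactly `0` at
some first time `T ≤ −e_var(x 0)/e_ter(x 0)`, staying positive before `T`
(whenever it is initially positive) and nonnegative up to `T`. -/
theorem stmt19 {n : ℕ}
    (evar eter : (Fin n → ℝ) → ℝ) (f : (Fin n → ℝ) → (Fin n → ℝ))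
    (x : ℝ → (Fin n → ℝ))
    (hevar : ContDiff ℝ 1 evar) (heter : ContDiff ℝ 1 eter)
    (hf : LocallyLipschitz f)
    (hx : ∀ t, 0 ≤ t → HasDerivAt x (f (x t)) t)
    (h0var : 0 ≤ evar (x 0)) (h0ter : eter (x 0) < 0)
    (hvar : ∀ t, 0 ≤ t → 0 ≤ evar (x t) →
      deriv (fun s => evar (x s)) t ≤ eter (x t))
    (hter : ∀ t, 0 ≤ t → 0 ≤ evar (x t) →
      deriv (fun s => eter (x s)) t ≤ 0) :
    ∃ T, 0 ≤ T ∧ T ≤ -(evar (x 0)) / eter (x 0) ∧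
      evar (x T) = 0 ∧
      (0 < evar (x 0) → ∀ t, 0 ≤ t → t < T → 0 < evar (x t)) ∧
      (evar (x 0) = 0 → T = 0) ∧
      (∀ t, 0 ≤ t → t ≤ T → 0 ≤ evar (x t)) :=
  stmt19_general evar eter f x hevar heter hx h0var h0ter hvar hter
end
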